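/- arXiv:1511.06736 — 6 statements merged into one kernel-verified Lean document; each statement's English description precedes it below -/
import Mathlib

section
/- The function f(z) = √z − √(z − √z) is strictly decreasing on the interval (1, ∞). -/
/-!
With `t = √z ≥ 1`, rationalising gives `t - √(t² - t) = 1 / (1 + √(1 - 1/t))`, and the right-hand
side is visibly decreasing in `t`, hence in `z`.
-/

open Real

theorem sub_sqrt_sq_sub_self {t : ℝ} (ht : 1 ≤ t) :
    t - √(t ^ 2 - t) = (1 + √(1 - t⁻¹))⁻¹ := by
  have ht0 : 0 < t := by linarith
  have hfactor : t ^ 2 - t = t ^ 2 * (1 - t⁻¹) := by field_simp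
  rw [hfactor, sqrt_mul (sq_nonneg t), sqrt_sq ht0.le]
  set s := √(1 - t⁻¹)
  have hs : s ^ 2 = 1 - t⁻¹ := sq_sqrt (sub_nonneg.mpr (inv_le_one_of_one_le₀ ht))
  refine eq_inv_of_mul_eq_one_left ?_
  calc (t - t * s) * (1 + s) = t * (1 - s ^ 2) := by ring
    _ = 1 := by rw [hs, sub_sub_cancel, mul_inv_cancel₀ ht0.ne']

theorem sqrt_sub_sqrt_sub_sqrt_eq {z : ℝ} (hz : 1 ≤ z) :
    √z - √(z - √z) = (1 + √(1 - (√z)⁻¹))⁻¹ := by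
  simpa only [sq_sqrt (zero_le_one.trans hz)] using sub_sqrt_sq_sub_self (one_le_sqrt.mpr hz)

theorem stmt_1 :
    StrictAntiOn (fun z : ℝ => Real.sqrt z - Real.sqrt (z - Real.sqrt z)) (Set.Ioi 1) := by
  intro a (ha : 1 < a) b (hb : 1 < b) hab
  dsimp only
  rw [sqrt_sub_sqrt_sub_sqrt_eq ha.le, sqrt_sub_sqrt_sub_sqrt_eq hb.le]
  have hsa : 1 ≤ √a := one_le_sqrt.mpr ha.le
  gcongr
  exact sub_nonneg.mpr (inv_le_one_of_one_le₀ hsa)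
end

section
/- If 4/3 < p ≤ θ, then 2t₀⁻ < p, where t₀⁻ = √z − √(z − √z) with z = pθ(p+1)/(θ+1). -/
/-!
Writing `s = √z`, the inequality `(s - 2/3)² < z - s` is equivalent to `4/3 < s`, so
`√z - √(z - √z) < 2/3` as soon as `16/9 < z`. For `4/3 < p ≤ θ` the number
`z = pθ(p+1)/(θ+1)` exceeds `16/9`, hence `2(√z - √(z - √z)) < 4/3 < p`.
-/

open Real

lemma sixteen_ninths_lt_mul_mul_add_one_div {p θ : ℝ} (hp : 4 / 3 < p) (hθ : 4 / 3 < θ) :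
    16 / 9 < p * θ * (p + 1) / (θ + 1) := by
  rw [lt_div_iff₀ (by linarith)]
  nlinarith [mul_pos (sub_pos.2 hp) (sub_pos.2 hθ)]

lemma sqrt_sub_sqrt_sub_sqrt_lt_two_thirds {z : ℝ} (hz : 16 / 9 < z) :
    √z - √(z - √z) < 2 / 3 := by
  have hs : 4 / 3 < √z := (lt_sqrt (by norm_num)).2 (by linarith)
  have hsq : √z ^ 2 = z := sq_sqrt (by linarith)
  have hlower : √z - 2 / 3 < √(z - √z) := by
    rw [lt_sqrt (by linarith)]
    nlinarith
  linarith

theorem stmt_4 (p θ : ℝ) (hp : 4 / 3 < p) (hpθ : p ≤ θ) :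
    2 * (Real.sqrt (p * θ * (p + 1) / (θ + 1)) -
      Real.sqrt (p * θ * (p + 1) / (θ + 1) - Real.sqrt (p * θ * (p + 1) / (θ + 1)))) < p := by
  have hz := sixteen_ninths_lt_mul_mul_add_one_div hp (hp.trans_le hpθ)
  linarith [sqrt_sub_sqrt_sub_sqrt_lt_two_thirds hz]
end

section
/- Let 1 < p ≤ θ and L(s) = s⁴ − (16pθ(p+1)/(θ+1)) s² + (16pθ(p+1)(p+θ+2)/(θ+1)²) s − 16pθ(p+1)²/(θ+1)². Then L has exactly one root in the interval (2, ∞). -/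
/-!
On `[2, ∞)` the second derivative `12 s² - 2A` of `L(s) = s⁴ - A s² + B s - C` changes sign at most
once, from negative to positive, so `L'` first decreases and then increases. Since `L'(2) < 0` and
`L'` tends to `+∞`, `L'` changes sign exactly once on `(2, ∞)`, so `L` too first decreases and then
increases there; as `L(2) < 0` and `L` tends to `+∞`, it has exactly one root in `(2, ∞)`.
Both values at `2` are negative because `(θ + 1)² L(2) / 16 = (θ + 1)² - pθ(p + 1)(2θ + 1 - p)`
and `(θ + 1)² L'(2) / 16 = 2(θ + 1)² - pθ(p + 1)(3θ + 2 - p)`, where `θ + 1 < pθ(p + 1)` and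
`p ≤ θ` bounds the last factors below by `θ + 1` and `2(θ + 1)`.
-/

open Set Filter Polynomial

theorem exists_sign_change_of_strictAntiOn_of_strictMonoOn {f : ℝ → ℝ} {a t : ℝ}
    (hf : ContinuousOn f (Ici a)) (hat : a ≤ t) (hanti : StrictAntiOn f (Icc a t))
    (hmono : StrictMonoOn f (Ici t)) (ha : f a < 0) (htop : Tendsto f atTop atTop) :
    ∃ r, a < r ∧ f r = 0 ∧ (∀ x ∈ Ico a r, f x < 0) ∧ ∀ x ∈ Ioi r, 0 < f x := by
  have hle_a : ∀ x ∈ Icc a t, f x ≤ f a := fun x hx =>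
    hanti.antitoneOn (left_mem_Icc.2 hat) hx hx.1
  obtain ⟨M, hM, htM⟩ :=
    ((htop.eventually (eventually_gt_atTop 0)).and (eventually_gt_atTop t)).exists
  obtain ⟨r, ⟨htr, hrM⟩, hr⟩ := intermediate_value_Ioo htM.le
    (hf.mono (Icc_subset_Ici_iff htM.le |>.2 hat))
    ⟨(hle_a t (right_mem_Icc.2 hat)).trans_lt ha, hM⟩
  have hr_mem : r ∈ Ici t := htr.le
  refine ⟨r, hat.trans_lt htr, hr, fun x hx => ?_, fun x hx => ?_⟩
  · rcases le_or_gt x t with hxt | hxt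
    · exact (hle_a x ⟨hx.1, hxt⟩).trans_lt ha
    · exact hr ▸ hmono hxt.le hr_mem hx.2
  · exact hr ▸ hmono hr_mem (htr.trans hx).le hx

theorem exists_sign_change_of_hasDerivAt {f f' : ℝ → ℝ} {a t : ℝ}
    (hf : ∀ x, HasDerivAt f (f' x) x) (hat : a ≤ t)
    (hneg : ∀ x ∈ Ioo a t, f' x < 0) (hpos : ∀ x ∈ Ioi t, 0 < f' x)
    (ha : f a < 0) (htop : Tendsto f atTop atTop) :
    ∃ r, a < r ∧ f r = 0 ∧ (∀ x ∈ Ico a r, f x < 0) ∧ ∀ x ∈ Ioi r, 0 < f x := by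
  have hcont : Continuous f := continuous_iff_continuousAt.2 fun x => (hf x).continuousAt
  refine exists_sign_change_of_strictAntiOn_of_strictMonoOn hcont.continuousOn hat ?_ ?_ ha htop
  · refine strictAntiOn_of_hasDerivWithinAt_neg (convex_Icc a t) hcont.continuousOn
      (fun x _ => (hf x).hasDerivWithinAt) ?_
    simpa only [interior_Icc] using hneg
  · refine strictMonoOn_of_hasDerivWithinAt_pos (convex_Ici t) hcont.continuousOn
      (fun x _ => (hf x).hasDerivWithinAt) ?_
    simpa only [interior_Ici] using hpos

section Quartic

variable (A B C : ℝ)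

theorem tendsto_quartic_atTop :
    Tendsto (fun s : ℝ => s ^ 4 - A * s ^ 2 + B * s - C) atTop atTop := by
  have hdeg :
      (X ^ 4 - Polynomial.C A * X ^ 2 + Polynomial.C B * X - Polynomial.C C : ℝ[X]).degree = 4 := by
    compute_degree!
  have hmonic :
      (X ^ 4 - Polynomial.C A * X ^ 2 + Polynomial.C B * X - Polynomial.C C : ℝ[X]).Monic := by
    monicity!
  refine Tendsto.congr (fun s => by simp) <|
    (X ^ 4 - Polynomial.C A * X ^ 2 + Polynomial.C B * X - Polynomial.C C)
      |>.tendsto_atTop_of_leadingCoeff_nonneg (by rw [hdeg]; norm_num)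
        (by rw [hmonic.leadingCoeff]; norm_num)

theorem tendsto_quartic_deriv_atTop :
    Tendsto (fun s : ℝ => 4 * s ^ 3 - 2 * A * s + B) atTop atTop := by
  have hdeg :
      (Polynomial.C 4 * X ^ 3 - Polynomial.C (2 * A) * X + Polynomial.C B : ℝ[X]).degree = 3 := by
    compute_degree!
  have hlead :
      (Polynomial.C 4 * X ^ 3 - Polynomial.C (2 * A) * X + Polynomial.C B : ℝ[X]).leadingCoeff = 4 := by
    rw [leadingCoeff, natDegree_eq_of_degree_eq_some hdeg]; simp
  refine Tendsto.congr (fun s => by simp) <|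
    (Polynomial.C 4 * X ^ 3 - Polynomial.C (2 * A) * X + Polynomial.C B)
      |>.tendsto_atTop_of_leadingCoeff_nonneg (by rw [hdeg]; norm_num) (by rw [hlead]; norm_num)

theorem hasDerivAt_quartic (x : ℝ) :
    HasDerivAt (fun s : ℝ => s ^ 4 - A * s ^ 2 + B * s - C) (4 * x ^ 3 - 2 * A * x + B) x :=
  ((((hasDerivAt_pow 4 x).sub ((hasDerivAt_pow 2 x).const_mul A)).add
    ((hasDerivAt_id x).const_mul B)).sub_const C).congr_deriv (by norm_num; ring)

theorem hasDerivAt_quartic_deriv (x : ℝ) :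
    HasDerivAt (fun s : ℝ => 4 * s ^ 3 - 2 * A * s + B) (12 * x ^ 2 - 2 * A) x :=
  (((hasDerivAt_pow 3 x).const_mul 4).sub
    ((hasDerivAt_id x).const_mul (2 * A))).add_const B |>.congr_deriv (by norm_num; ring)

theorem existsUnique_quartic_root_Ioi {a : ℝ} (ha : 0 ≤ a)
    (hLa : a ^ 4 - A * a ^ 2 + B * a - C < 0) (hL'a : 4 * a ^ 3 - 2 * A * a + B < 0) :
    ∃! s, s ∈ Ioi a ∧ s ^ 4 - A * s ^ 2 + B * s - C = 0 := by
  -- the second derivative `12 x² - 2A` vanishes only at `x = ±√(A / 6)`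
  obtain ⟨r, har, -, hL'neg, hL'pos⟩ := exists_sign_change_of_hasDerivAt
    (hasDerivAt_quartic_deriv A B) (le_max_left a √(A / 6))
    (fun x hx => by
      have := (Real.lt_sqrt (ha.trans hx.1.le)).1 ((lt_max_iff.1 hx.2).resolve_left hx.1.not_gt)
      linarith)
    (fun x hx => by
      have := Real.lt_sq_of_sqrt_lt ((le_max_right _ _).trans_lt hx)
      linarith)
    hL'a (tendsto_quartic_deriv_atTop A B)
  obtain ⟨s, has, hs, hneg, hpos⟩ := exists_sign_change_of_hasDerivAt (hasDerivAt_quartic A B C)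
    har.le (fun x hx => hL'neg x (Ioo_subset_Ico_self hx)) hL'pos hLa (tendsto_quartic_atTop A B C)
  refine ⟨s, ⟨has, hs⟩, fun x ⟨hax, hx⟩ => ?_⟩
  rcases lt_trichotomy x s with hxs | rfl | hxs
  · exact absurd hx (hneg x ⟨hax.le, hxs⟩).ne
  · rfl
  · exact absurd hx (hpos x hxs).ne'

end Quartic

section Coefficients

variable {p θ : ℝ}

theorem add_one_lt_mul_mul_add_one (hp : 1 < p) (hθ : 1 < θ) : θ + 1 < p * θ * (p + 1) := by
  nlinarith [mul_lt_mul_of_pos_right (by nlinarith : 2 < p * (p + 1)) (by linarith : 0 < θ)]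

theorem quartic_at_two_neg (hp : 1 < p) (hpθ : p ≤ θ) :
    (2 : ℝ) ^ 4 - 16 * p * θ * (p + 1) / (θ + 1) * 2 ^ 2 +
      16 * p * θ * (p + 1) * (p + θ + 2) / (θ + 1) ^ 2 * 2 -
      16 * p * θ * (p + 1) ^ 2 / (θ + 1) ^ 2 < 0 := by
  have hθ : 0 < θ + 1 := by linarith
  have hq := add_one_lt_mul_mul_add_one hp (hp.trans_le hpθ)
  have key : (θ + 1) ^ 2 < p * θ * (p + 1) * (2 * θ + 1 - p) := by nlinarith
  rw [show (2 : ℝ) ^ 4 - 16 * p * θ * (p + 1) / (θ + 1) * 2 ^ 2 +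
      16 * p * θ * (p + 1) * (p + θ + 2) / (θ + 1) ^ 2 * 2 -
      16 * p * θ * (p + 1) ^ 2 / (θ + 1) ^ 2 =
      16 * ((θ + 1) ^ 2 - p * θ * (p + 1) * (2 * θ + 1 - p)) / (θ + 1) ^ 2 by
    field_simp; ring]
  exact div_neg_of_neg_of_pos (by linarith) (by positivity)

theorem quartic_deriv_at_two_neg (hp : 1 < p) (hpθ : p ≤ θ) :
    4 * (2 : ℝ) ^ 3 - 2 * (16 * p * θ * (p + 1) / (θ + 1)) * 2 +
      16 * p * θ * (p + 1) * (p + θ + 2) / (θ + 1) ^ 2 < 0 := by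
  have hθ : 0 < θ + 1 := by linarith
  have hq := add_one_lt_mul_mul_add_one hp (hp.trans_le hpθ)
  have key : 2 * (θ + 1) ^ 2 < p * θ * (p + 1) * (3 * θ + 2 - p) := by nlinarith
  rw [show 4 * (2 : ℝ) ^ 3 - 2 * (16 * p * θ * (p + 1) / (θ + 1)) * 2 +
      16 * p * θ * (p + 1) * (p + θ + 2) / (θ + 1) ^ 2 =
      16 * (2 * (θ + 1) ^ 2 - p * θ * (p + 1) * (3 * θ + 2 - p)) / (θ + 1) ^ 2 by
    field_simp; ring]
  exact div_neg_of_neg_of_pos (by linarith) (by positivity)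

end Coefficients

theorem stmt_7 (p θ : ℝ) (hp : 1 < p) (hpθ : p ≤ θ)
    (L : ℝ → ℝ)
    (hL : ∀ s, L s = s ^ 4 - (16 * p * θ * (p + 1) / (θ + 1)) * s ^ 2 +
      (16 * p * θ * (p + 1) * (p + θ + 2) / (θ + 1) ^ 2) * s -
      16 * p * θ * (p + 1) ^ 2 / (θ + 1) ^ 2) :
    ∃! s : ℝ, s ∈ Set.Ioi (2 : ℝ) ∧ L s = 0 := by
  simp only [hL]
  exact existsUnique_quartic_root_Ioi _ _ _ zero_le_two (quartic_at_two_neg hp hpθ)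
    (quartic_deriv_at_two_neg hp hpθ)
end

section
/- Let 1 < p ≤ θ, z = pθ(p+1)/(θ+1), t₀⁺ = √z + √(z − √z), and L(s) = s⁴ − 16z s² + (16z(p+θ+2)/(θ+1)) s − 16z(p+1)/(θ+1). Then L(2t₀⁺) = (16pθ(p+1)(θ−p)/(θ+1)²)(1 − 2t₀⁺); in particular if p < θ then L(2t₀⁺) < 0. -/
/-!
Write `a = √z`. Since `(t₀⁺ - a)² = z - a = a² - a`, the point `t₀⁺` is a root of
`t² - 2at + a`, and reducing `t⁴` modulo this quadratic collapses the quartic part of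
`L(2t₀⁺)` to `16z(1 - 4t₀⁺)`. What remains is affine in `t₀⁺` and factors as
`16z(θ - p)/(θ + 1) · (1 - 2t₀⁺)`; the sign claim follows from `t₀⁺ ≥ √z ≥ 1`.
-/

open Real

lemma one_le_mul_mul_add_one_div {p θ : ℝ} (hp : 1 < p) (hpθ : p ≤ θ) :
    1 ≤ p * θ * (p + 1) / (θ + 1) := by
  rw [one_le_div (by linarith)]
  nlinarith [mul_le_mul_of_nonneg_right hp.le (by linarith : (0 : ℝ) ≤ θ)]

lemma sqrt_add_sqrt_sub_sqrt_sq {z : ℝ} (hz : 1 ≤ z) :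
    (√z + √(z - √z)) ^ 2 = 2 * √z * (√z + √(z - √z)) - √z := by
  linear_combination sq_sqrt (sub_nonneg.mpr (sqrt_le_self_iff.mpr (Or.inr hz))) -
    sq_sqrt (by linarith : (0 : ℝ) ≤ z)

lemma one_le_sqrt_add_sqrt_sub_sqrt {z : ℝ} (hz : 1 ≤ z) : 1 ≤ √z + √(z - √z) := by
  linarith [one_le_sqrt.mpr hz, sqrt_nonneg (z - √z)]

lemma two_mul_pow_four_sub_of_sq_eq {a t : ℝ} (h : t ^ 2 = 2 * a * t - a) :
    (2 * t) ^ 4 - 16 * a ^ 2 * (2 * t) ^ 2 = 16 * a ^ 2 * (1 - 4 * t) := by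
  linear_combination (16 * t ^ 2 + 32 * a * t - 16 * a) * h

theorem stmt_8 (p θ : ℝ) (hp : 1 < p) (hpθ : p ≤ θ)
    (z t₀ : ℝ) (hz : z = p * θ * (p + 1) / (θ + 1))
    (ht : t₀ = Real.sqrt z + Real.sqrt (z - Real.sqrt z))
    (L : ℝ → ℝ)
    (hL : ∀ s, L s = s ^ 4 - 16 * z * s ^ 2 + (16 * z * (p + θ + 2) / (θ + 1)) * s -
      16 * z * (p + 1) / (θ + 1)) :
    L (2 * t₀) = (16 * p * θ * (p + 1) * (θ - p) / (θ + 1) ^ 2) * (1 - 2 * t₀) ∧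
    (p < θ → L (2 * t₀) < 0) := by
  have hz1 : 1 ≤ z := hz ▸ one_le_mul_mul_add_one_div hp hpθ
  have hquartic : (2 * t₀) ^ 4 - 16 * z * (2 * t₀) ^ 2 = 16 * z * (1 - 4 * t₀) := by
    have ht₀ : t₀ ^ 2 = 2 * √z * t₀ - √z := ht ▸ sqrt_add_sqrt_sub_sqrt_sq hz1
    simpa only [sq_sqrt (by linarith : 0 ≤ z)] using two_mul_pow_four_sub_of_sq_eq ht₀
  have hθ : θ + 1 ≠ 0 := by linarith
  have heq : L (2 * t₀) = (16 * p * θ * (p + 1) * (θ - p) / (θ + 1) ^ 2) * (1 - 2 * t₀) := by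
    rw [hL, hquartic, hz]
    field_simp
    ring
  refine ⟨heq, fun hlt => heq ▸ mul_neg_of_pos_of_neg ?_ ?_⟩
  · have : 0 < θ - p := sub_pos.mpr hlt
    have : 0 < θ := by linarith
    have : 0 < p := by linarith
    positivity
  · linarith [ht ▸ one_le_sqrt_add_sqrt_sub_sqrt hz1]
end

section
/- Let 4/3 < p ≤ θ and L(s) = s⁴ − (16pθ(p+1)/(θ+1)) s² + (16pθ(p+1)(p+θ+2)/(θ+1)²) s − 16pθ(p+1)²/(θ+1)². Then L(p) < 0. -/
/-!
Write `A = pθ(p+1)/(θ+1)` and `q(s) = s² - ((p+θ+2)/(θ+1)) s + (p+1)/(θ+1)`, so that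
`L(s) = s⁴ - 16 A s² + 16 A s (p+θ+2)/(θ+1) - 16 A (p+1)/(θ+1)` gives `L(p) = p⁴ - 16 A q(p)`.
For `0 < p ≤ θ` we have `A ≥ p²` and `q(s) - (s-1)² = (s-1)(θ-p)/(θ+1) ≥ 0` for `s ≥ 1`, hence
`L(p) ≤ p⁴ - 16p²(p-1)² = p²(5p-4)(4-3p)`, which is negative once `p > 4/3`.
-/

lemma sq_le_mul_mul_div {p θ : ℝ} (hp : 0 ≤ p) (hpθ : p ≤ θ) :
    p ^ 2 ≤ p * θ * (p + 1) / (θ + 1) := by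
  rw [le_div_iff₀ (by linarith)]
  nlinarith [mul_nonneg hp (sub_nonneg.2 hpθ)]

lemma sub_one_sq_le_quadratic {p θ s : ℝ} (hθ : 0 < θ + 1) (hpθ : p ≤ θ) (hs : 1 ≤ s) :
    (s - 1) ^ 2 ≤ s ^ 2 - (p + θ + 2) / (θ + 1) * s + (p + 1) / (θ + 1) := by
  have key : s ^ 2 - (p + θ + 2) / (θ + 1) * s + (p + 1) / (θ + 1) - (s - 1) ^ 2 =
      (s - 1) * (θ - p) / (θ + 1) := by
    field_simp
    ring
  have : 0 ≤ (s - 1) * (θ - p) / (θ + 1) := by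
    apply div_nonneg _ hθ.le
    exact mul_nonneg (by linarith) (by linarith)
  linarith

lemma pow_four_sub_sixteen_mul_lt_zero {p : ℝ} (hp : 4 / 3 < p) :
    p ^ 4 - 16 * p ^ 2 * (p - 1) ^ 2 < 0 := by
  have factor : p ^ 4 - 16 * p ^ 2 * (p - 1) ^ 2 = -(p ^ 2 * (5 * p - 4) * (3 * p - 4)) := by
    ring
  rw [factor, neg_lt_zero]
  have : 0 < 5 * p - 4 := by linarith
  have : 0 < 3 * p - 4 := by linarith
  positivity

theorem stmt_10 (p θ : ℝ) (hp : 4 / 3 < p) (hpθ : p ≤ θ)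
    (L : ℝ → ℝ)
    (hL : ∀ s, L s = s ^ 4 - (16 * p * θ * (p + 1) / (θ + 1)) * s ^ 2 +
      (16 * p * θ * (p + 1) * (p + θ + 2) / (θ + 1) ^ 2) * s -
      16 * p * θ * (p + 1) ^ 2 / (θ + 1) ^ 2) :
    L p < 0 := by
  have hθ : 0 < θ + 1 := by linarith
  set A := p * θ * (p + 1) / (θ + 1) with hA
  set q := p ^ 2 - (p + θ + 2) / (θ + 1) * p + (p + 1) / (θ + 1) with hq
  have hLp : L p = p ^ 4 - 16 * A * q := by
    rw [hL, hA, hq]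
    field_simp
    ring
  have hA_ge : p ^ 2 ≤ A := sq_le_mul_mul_div (by linarith) hpθ
  have hq_ge : (p - 1) ^ 2 ≤ q := sub_one_sq_le_quadratic hθ hpθ (by linarith)
  have hAq : p ^ 2 * (p - 1) ^ 2 ≤ A * q :=
    mul_le_mul hA_ge hq_ge (sq_nonneg _) ((sq_nonneg p).trans hA_ge)
  have := pow_four_sub_sixteen_mul_lt_zero hp
  rw [hLp]
  linarith
end

section
/- For all real 1 < p ≤ θ, the quantity 2t₀⁺(θ+1)/(pθ−1) > 4, where t₀⁺ = √z + √(z − √z) and z = pθ(p+1)/(θ+1). -/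
/-!
Write `A = √z`, so that `t₀⁺ = A + √(A² - A)`, and `R = 2(pθ - 1)/(θ + 1)`; the claim is `R < t₀⁺`.
Since `A > 1`, this is clear when `R ≤ 1`. Otherwise it follows from `(R - A)² < A² - A`, i.e.
`R² < A(2R - 1)`, which after squaring and clearing denominators becomes the quartic inequality
`16(pθ - 1)⁴ < pθ(p + 1)(θ + 1)(4pθ - θ - 5)²`. Both sides agree to leading order as `p, θ → ∞`,
so the bound `4` is sharp.
-/

open Real

lemma lt_add_sqrt_sq_sub_of_sq_lt {A R : ℝ} (h : R ^ 2 < A * (2 * R - 1)) :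
    R < A + √(A ^ 2 - A) := by
  have : R - A < √(A ^ 2 - A) := lt_sqrt_of_sq_lt (by nlinarith)
  linarith

lemma sq_lt_sqrt_mul_of_pow_four_lt {z R : ℝ} (hR : 1 < R) (h : R ^ 4 < z * (2 * R - 1) ^ 2) :
    R ^ 2 < √z * (2 * R - 1) := by
  have h2R : 0 ≤ 2 * R - 1 := by linarith
  calc R ^ 2 = √((R ^ 2) ^ 2) := (sqrt_sq (by positivity)).symm
    _ < √(z * (2 * R - 1) ^ 2) := sqrt_lt_sqrt (by positivity) (by rwa [← pow_mul])
    _ = √z * (2 * R - 1) := by rw [sqrt_mul' _ (by positivity), sqrt_sq h2R]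

lemma sixteen_mul_sub_one_pow_four_lt {p θ : ℝ} (hp : 1 < p) (hpθ : p ≤ θ)
    (hR : θ + 1 < 2 * (p * θ - 1)) :
    16 * (p * θ - 1) ^ 4 < p * θ * (p + 1) * (θ + 1) * (4 * p * θ - θ - 5) ^ 2 := by
  have hθ : 1 < θ := hp.trans_le hpθ
  nlinarith [mul_pos (sub_pos.2 hp) (sub_pos.2 hθ), sq_nonneg (p * θ - θ),
    mul_pos (mul_pos (by linarith : (0 : ℝ) < p) (by linarith : (0 : ℝ) < θ))
      (by linarith : (0 : ℝ) < θ + 1),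
    sq_nonneg ((p * θ - 1) * (θ - p)), sq_nonneg ((p * θ - 1) * (p - 1))]

lemma div_pow_four_lt_mul_sq {p θ : ℝ} (hp : 1 < p) (hpθ : p ≤ θ)
    (hR : 1 < 2 * (p * θ - 1) / (θ + 1)) :
    (2 * (p * θ - 1) / (θ + 1)) ^ 4 <
      p * θ * (p + 1) / (θ + 1) * (2 * (2 * (p * θ - 1) / (θ + 1)) - 1) ^ 2 := by
  have hθ : 0 < θ + 1 := by linarith
  rw [one_lt_div hθ] at hR
  have hdiff : p * θ * (p + 1) / (θ + 1) * (2 * (2 * (p * θ - 1) / (θ + 1)) - 1) ^ 2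
      - (2 * (p * θ - 1) / (θ + 1)) ^ 4 = (p * θ * (p + 1) * (θ + 1) * (4 * p * θ - θ - 5) ^ 2
      - 16 * (p * θ - 1) ^ 4) / (θ + 1) ^ 4 := by
    field_simp
    ring
  rw [← sub_pos, hdiff]
  exact div_pos (sub_pos.2 (sixteen_mul_sub_one_pow_four_lt hp hpθ hR)) (pow_pos hθ 4)

theorem stmt_14 (p θ : ℝ) (hp : 1 < p) (hpθ : p ≤ θ)
    (z : ℝ) (hz : z = p * θ * (p + 1) / (θ + 1)) :
    4 < 2 * (Real.sqrt z + Real.sqrt (z - Real.sqrt z)) * (θ + 1) / (p * θ - 1) := by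
  have hθ : 0 < θ + 1 := by linarith
  have hpθ1 : 0 < p * θ - 1 := by nlinarith
  have hz1 : 1 < z := by
    rw [hz, one_lt_div hθ]; nlinarith
  set R := 2 * (p * θ - 1) / (θ + 1)
  suffices hR : R < √z + √(z - √z) by
    have : R * (θ + 1) = 2 * (p * θ - 1) := div_mul_cancel₀ _ hθ.ne'
    rw [lt_div_iff₀ hpθ1]
    nlinarith [mul_lt_mul_of_pos_right hR hθ]
  rcases le_or_gt R 1 with hR | hR
  · have : 1 < √z := by rwa [lt_sqrt zero_le_one, one_pow]
    linarith [sqrt_nonneg (z - √z)]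
  · nth_rw 2 [← sq_sqrt (zero_le_one.trans hz1.le)]
    refine lt_add_sqrt_sq_sub_of_sq_lt (sq_lt_sqrt_mul_of_pow_four_lt hR ?_)
    rw [hz]
    exact div_pow_four_lt_mul_sq hp hpθ hR
end
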